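/- arXiv:1711.08479 — 2 statements merged into one kernel-verified Lean document; each statement's English description precedes it below -/
import Mathlib

section
/- Define φ₁ : ℝ³ → ℝ by φ₁(x,y,z) = z^{1/3}, and φ₂ : ℝ³ → ℝ by φ₂(x,y,z) = x³ / (x² + x·y·z^{1/3} + y²·z^{2/3}) whenever x² + x·y·z^{1/3} + y²·z^{2/3} ≠ 0 and φ₂(x,y,z) = 0 otherwise. Then φ₁ and φ₂ are continuous on ℝ³ and satisfy x³·y·φ₁(x,y,z) + (x³ − y³·z)·φ₂(x,y,z) = x⁴ for all (x,y,z) ∈ ℝ³. -/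
/-!
The cube root is continuous as the inverse of the odd power map. Writing `u = y·∛z`, the
function `φ₂` is `x³ / (x² + x u + u²)`; this denominator is at least `(x² + u²)/2`, so the
quotient is bounded by `2|x|` and is continuous also at the origin, where the denominator
vanishes. Since `x³ − y³ z = x³ − u³ = (x − u)(x² + x u + u²)`, the equation reduces to
`x³ u + (x − u) x³ = x⁴`.
-/

open Filter Topology

lemma continuous_of_odd_pow_rightInverse {n : ℕ} (hn : Odd n) {g : ℝ → ℝ}
    (hg : ∀ t, g t ^ n = t) : Continuous g := by
  let e : ℝ ≃o ℝ := StrictMono.orderIsoOfSurjective (· ^ n) hn.strictMono_pow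
    fun t => ⟨g t, hg t⟩
  have : g = e.symm := funext fun t => e.injective <| by
    rw [e.apply_symm_apply]
    exact hg t
  exact this ▸ e.symm.continuous

lemma sq_add_sq_le_two_mul_sq_add_mul_add_sq (x u : ℝ) :
    x ^ 2 + u ^ 2 ≤ 2 * (x ^ 2 + x * u + u ^ 2) := by
  nlinarith [sq_nonneg (x + u)]

lemma sq_add_mul_add_sq_pos {x u : ℝ} (h : (x, u) ≠ 0) : 0 < x ^ 2 + x * u + u ^ 2 := by
  have : 0 < x ^ 2 + u ^ 2 := by
    by_contra! hle
    exact h (Prod.mk_eq_zero.2 ⟨by nlinarith [sq_nonneg u], by nlinarith [sq_nonneg x]⟩)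
  linarith [sq_add_sq_le_two_mul_sq_add_mul_add_sq x u]

lemma eq_zero_of_sq_add_mul_add_sq_eq_zero {x u : ℝ} (h : x ^ 2 + x * u + u ^ 2 = 0) :
    x = 0 := by
  nlinarith [sq_add_sq_le_two_mul_sq_add_mul_add_sq x u, sq_nonneg u]

lemma abs_cube_div_sq_add_mul_add_sq_le (x u : ℝ) :
    |x ^ 3 / (x ^ 2 + x * u + u ^ 2)| ≤ 2 * |x| := by
  rcases eq_or_ne (x, u) 0 with h | h
  · simp_all
  have hpos := sq_add_mul_add_sq_pos h
  rw [abs_div, abs_of_pos hpos, div_le_iff₀ hpos, abs_pow]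
  nlinarith [abs_nonneg x, sq_abs x, sq_add_sq_le_two_mul_sq_add_mul_add_sq x u, sq_nonneg u]

lemma continuous_cube_div_sq_add_mul_add_sq :
    Continuous fun q : ℝ × ℝ => q.1 ^ 3 / (q.1 ^ 2 + q.1 * q.2 + q.2 ^ 2) := by
  refine continuous_iff_continuousAt.2 fun q => ?_
  rcases eq_or_ne q 0 with rfl | hq
  · have hbound : Tendsto (fun q : ℝ × ℝ => 2 * |q.1|) (𝓝 0) (𝓝 0) := by
      simpa using ((continuous_fst.abs).const_mul 2).tendsto (0 : ℝ × ℝ)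
    simpa [ContinuousAt] using
      squeeze_zero_norm (fun q : ℝ × ℝ => abs_cube_div_sq_add_mul_add_sq_le q.1 q.2) hbound
  · exact (continuous_fst.pow 3).continuousAt.div (by fun_prop)
      (sq_add_mul_add_sq_pos hq).ne'

lemma cube_mul_add_sub_cube_mul_cube_div (x u : ℝ) :
    x ^ 3 * u + (x ^ 3 - u ^ 3) * (x ^ 3 / (x ^ 2 + x * u + u ^ 2)) = x ^ 4 := by
  rcases eq_or_ne (x ^ 2 + x * u + u ^ 2) 0 with h | h
  · simp [eq_zero_of_sq_add_mul_add_sq_eq_zero h]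
  · have hfactor : x ^ 3 - u ^ 3 = (x - u) * (x ^ 2 + x * u + u ^ 2) := by ring
    rw [hfactor, mul_assoc, mul_div_cancel₀ _ h]
    ring

/-- With `φ₁(x,y,z) = z^{1/3}` and `φ₂(x,y,z) = x³ / (x² + x·y·z^{1/3} + y²·z^{2/3})`
(extended by `0` where the denominator vanishes), both `φ₁` and `φ₂` are continuous on `ℝ³`
and satisfy `x³·y·φ₁ + (x³ − y³·z)·φ₂ = x⁴` everywhere. Here `cbrt` is the real cube root,
i.e. the unique function with `(cbrt t)³ = t` for all `t`. -/
theorem continuous_solution_of_equation (cbrt : ℝ → ℝ) (hcbrt : ∀ t, cbrt t ^ 3 = t)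
    (φ₁ φ₂ : ℝ × ℝ × ℝ → ℝ)
    (hφ₁ : ∀ p : ℝ × ℝ × ℝ, φ₁ p = cbrt p.2.2)
    (hφ₂ : ∀ p : ℝ × ℝ × ℝ,
      φ₂ p = if p.1 ^ 2 + p.1 * p.2.1 * cbrt p.2.2 + p.2.1 ^ 2 * (cbrt p.2.2) ^ 2 ≠ 0 then
          p.1 ^ 3 / (p.1 ^ 2 + p.1 * p.2.1 * cbrt p.2.2 + p.2.1 ^ 2 * (cbrt p.2.2) ^ 2)
        else 0) :
    Continuous φ₁ ∧ Continuous φ₂ ∧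
      ∀ x y z : ℝ,
        x ^ 3 * y * φ₁ (x, y, z) + (x ^ 3 - y ^ 3 * z) * φ₂ (x, y, z) = x ^ 4 := by
  have hcont : Continuous cbrt := continuous_of_odd_pow_rightInverse (by decide) hcbrt
  have hφ₂' : φ₂ = fun p => p.1 ^ 3 /
      (p.1 ^ 2 + p.1 * (p.2.1 * cbrt p.2.2) + (p.2.1 * cbrt p.2.2) ^ 2) := by
    funext p
    -- the `if` is redundant: the `else` branch is `x³ / 0 = 0`
    rw [hφ₂, ite_eq_left_iff.2 fun h => by rw [not_not.1 h, div_zero]]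
    ring
  refine ⟨funext hφ₁ ▸ hcont.comp continuous_snd.snd, ?_, fun x y z => ?_⟩
  · rw [hφ₂']
    exact continuous_cube_div_sq_add_mul_add_sq.comp
      (continuous_fst.prodMk (continuous_snd.fst.mul (hcont.comp continuous_snd.snd)))
  · rw [hφ₁, hφ₂', show y ^ 3 * z = (y * cbrt z) ^ 3 by rw [mul_pow, hcbrt], mul_assoc]
    exact cube_mul_add_sub_cube_mul_cube_div x (y * cbrt z)
end

section
/- There do not exist Nash regulous functions ψ₁, ψ₂ : ℝ⁴ → ℝ satisfying x⁴·y²·ψ₁(x,y,z,w) + (x⁴ − y⁴·(z⁴ + w⁴))·ψ₂(x,y,z,w) = x⁶ for all (x,y,z,w) ∈ ℝ⁴. -/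
/-- A set `S ⊆ ℝⁿ` is *semialgebraic* if it is a finite union of sets of the form
`{x : p x = 0, q₁ x > 0, …, q_r x > 0}` for real polynomials `p, q₁, …, q_r`. -/
def IsSemialgebraic {n : ℕ} (S : Set (Fin n → ℝ)) : Prop :=
  ∃ (k : ℕ) (p : Fin k → MvPolynomial (Fin n) ℝ) (r : Fin k → ℕ)
    (q : (i : Fin k) → Fin (r i) → MvPolynomial (Fin n) ℝ),
    S = ⋃ i, {x | MvPolynomial.eval x (p i) = 0 ∧
        ∀ j, 0 < MvPolynomial.eval x (q i j)}

/-- A *Nash function* on `ℝⁿ` is a real-analytic function `ℝⁿ → ℝ` whose graph is a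
semialgebraic subset of `ℝⁿ⁺¹`. -/
def IsNashFunction {n : ℕ} (f : (Fin n → ℝ) → ℝ) : Prop :=
  AnalyticOnNhd ℝ f Set.univ ∧
    IsSemialgebraic {v : Fin (n + 1) → ℝ | v (Fin.last n) = f (Fin.init v)}

/-- A continuous `f : ℝⁿ → ℝ` is *Nash regulous* if there are Nash functions `g, h` with
the zero set of `h` nowhere dense and `f = g / h` off the zero set of `h`. -/
def IsNashRegulous {n : ℕ} (f : (Fin n → ℝ) → ℝ) : Prop :=
  Continuous f ∧ ∃ g h : (Fin n → ℝ) → ℝ, IsNashFunction g ∧ IsNashFunction h ∧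
    IsNowhereDense {x | h x = 0} ∧ ∀ x, h x ≠ 0 → f x = g x / h x

/-! On the surface `x⁴ = y⁴ (z⁴ + w⁴)` the equation forces `ψ₁ = x² / y²`, so by continuity
`ψ₁ (0, 0, z, w) ^ 2 = z⁴ + w⁴`. Write `ψ₁ = g / h` with `g`, `h` analytic, so that `g = ψ₁ h`.
Along the lines `t ↦ (t a, t b, z, w)` through a point `(a, b, ·, ·)` where `h ≠ 0`, the
lowest-order coefficients in `t` of `g` and `h` are analytic functions `P`, `Q` of `(z, w)` with
`Q ≢ 0` and `P = ψ₁ (0, 0, z, w) Q`, hence `P² = (z⁴ + w⁴) Q²`. Comparing the lowest-order terms of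
`P` and `Q` along the lines `t ↦ (t, t c)` gives real polynomials with `p² = (1 + c⁴) q²` and
`q ≠ 0`, which is impossible because `1 + X⁴` has a simple complex root. -/

open Filter Topology Asymptotics Set
open scoped Nat

section OneVariable

variable {𝕜 : Type*} [NontriviallyNormedField 𝕜] [CharZero 𝕜] [CompleteSpace 𝕜]
  {u v w : 𝕜 → 𝕜} {m : ℕ}

theorem eq_zero_of_forall_iteratedDeriv_eq_zero [PreconnectedSpace 𝕜]
    (hu : AnalyticOnNhd 𝕜 u univ) (h : ∀ n, iteratedDeriv n u 0 = 0) : u = 0 := by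
  refine (AnalyticOnNhd.analyticOrderAt_eq_top_iff_eq_zero 0 fun t => hu t trivial).mp ?_
  refine ENat.eq_top_iff_forall_ge.mpr fun n => ?_
  exact (natCast_le_analyticOrderAt_iff_iteratedDeriv_eq_zero (hu 0 trivial)).mpr fun i _ => h i

theorem exists_min_iteratedDeriv_ne_zero [PreconnectedSpace 𝕜] {ι : Type*} {u : ι → 𝕜 → 𝕜}
    (hu : ∀ i, AnalyticOnNhd 𝕜 (u i) univ) (hne : ∃ i t, u i t ≠ 0) :
    ∃ m, (∀ j < m, ∀ i, iteratedDeriv j (u i) 0 = 0) ∧ ∃ i, iteratedDeriv m (u i) 0 ≠ 0 := by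
  classical
  have hex : ∃ m i, iteratedDeriv m (u i) 0 ≠ 0 := by
    obtain ⟨i, t, ht⟩ := hne
    by_contra! h
    exact ht (congrFun (eq_zero_of_forall_iteratedDeriv_eq_zero (hu i) fun n => h n i) t)
  exact ⟨Nat.find hex, fun j hj i => not_not.mp fun h => Nat.find_min hex hj ⟨i, h⟩,
    Nat.find_spec hex⟩

theorem exists_eq_pow_mul_of_iteratedDeriv_eq_zero (hu : AnalyticAt 𝕜 u 0)
    (h : ∀ j < m, iteratedDeriv j u 0 = 0) :
    ∃ F, ContinuousAt F 0 ∧ F 0 = iteratedDeriv m u 0 / m ! ∧ ∀ t, u t = t ^ m * F t := by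
  obtain ⟨G, hG, hu_eq⟩ := hu.exists_eq_sum_add_pow_mul (m + 1)
  refine ⟨fun t => iteratedDeriv m u 0 / m ! + t * G t, by fun_prop, by simp, fun t => ?_⟩
  rw [hu_eq, Finset.sum_range_succ, Finset.sum_eq_zero fun j hj => by
    rw [h j (Finset.mem_range.mp hj), smul_zero]]
  simp only [smul_eq_mul]
  ring

theorem iteratedDeriv_eq_zero_of_isBigO (hu : AnalyticAt 𝕜 u 0) (h : u =O[𝓝 0] (· ^ m)) :
    ∀ j < m, iteratedDeriv j u 0 = 0 := by
  intro j hj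
  induction j using Nat.strong_induction_on with
  | _ j ih =>
  obtain ⟨F, hF, hF0, hu_eq⟩ :=
    exists_eq_pow_mul_of_iteratedDeriv_eq_zero hu fun i hi => ih i hi (hi.trans hj)
  have hF_tendsto : Tendsto F (𝓝[≠] 0) (𝓝 0) := by
    refine ((h.trans_isLittleO (isLittleO_pow_pow hj)).tendsto_div_nhds_zero.mono_left
      nhdsWithin_le_nhds).congr' ?_
    filter_upwards [self_mem_nhdsWithin] with t ht
    rw [hu_eq, mul_div_cancel_left₀ _ (pow_ne_zero _ ht)]
  have hF0' := tendsto_nhds_unique (hF.tendsto.mono_left nhdsWithin_le_nhds) hF_tendsto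
  simpa [hF0, Nat.factorial_ne_zero] using hF0'

theorem iteratedDeriv_eq_mul_of_eq_mul (hu : AnalyticAt 𝕜 u 0) (hv : AnalyticAt 𝕜 v 0)
    (hw : ContinuousAt w 0) (huv : ∀ t, u t = w t * v t)
    (hv0 : ∀ j < m, iteratedDeriv j v 0 = 0) :
    iteratedDeriv m u 0 = w 0 * iteratedDeriv m v 0 := by
  obtain ⟨G, hG, hG0, hv_eq⟩ := exists_eq_pow_mul_of_iteratedDeriv_eq_zero hv hv0
  have hu_eq' : ∀ t, u t = t ^ m * (w t * G t) := fun t => by rw [huv, hv_eq]; ring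
  have hu_isBigO : u =O[𝓝 0] (· ^ m) := by
    simpa [← hu_eq'] using (isBigO_refl (· ^ m) (𝓝 (0 : 𝕜))).mul
      ((hw.mul hG).tendsto.isBigO_one 𝕜)
  obtain ⟨F, hF, hF0, hu_eq⟩ := exists_eq_pow_mul_of_iteratedDeriv_eq_zero hu
    (iteratedDeriv_eq_zero_of_isBigO hu hu_isBigO)
  have hFwG : F 0 = w 0 * G 0 := by
    refine tendsto_nhds_unique_of_eventuallyEq (l := 𝓝[≠] 0)
      (hF.tendsto.mono_left nhdsWithin_le_nhds)
      ((hw.mul hG).tendsto.mono_left nhdsWithin_le_nhds) ?_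
    filter_upwards [self_mem_nhdsWithin] with t ht
    exact mul_left_cancel₀ (pow_ne_zero m ht) ((hu_eq t).symm.trans (hu_eq' t))
  rwa [hF0, hG0, ← mul_div_assoc, div_left_inj' (Nat.cast_ne_zero.mpr m.factorial_ne_zero)]
    at hFwG

theorem sq_iteratedDeriv_add_two_div_factorial {a : 𝕜} (hu : AnalyticAt 𝕜 u 0)
    (hv : AnalyticAt 𝕜 v 0) (huv : ∀ t, u t ^ 2 = a * t ^ 4 * v t ^ 2)
    (hv0 : ∀ j < m, iteratedDeriv j v 0 = 0) :
    (iteratedDeriv (m + 2) u 0 / (m + 2)!) ^ 2 = a * (iteratedDeriv m v 0 / m !) ^ 2 := by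
  obtain ⟨G, hG, hG0, hv_eq⟩ := exists_eq_pow_mul_of_iteratedDeriv_eq_zero hv hv0
  have hu_sq : ∀ t, u t ^ 2 = (t ^ (m + 2)) ^ 2 * (a * G t ^ 2) := fun t => by
    rw [huv, hv_eq]; ring
  have hu_isBigO : u =O[𝓝 0] (· ^ (m + 2)) := by
    have : (fun t => (t ^ (m + 2)) ^ 2 * (a * G t ^ 2)) =O[𝓝 0] fun t => (t ^ (m + 2)) ^ 2 := by
      simpa using (isBigO_refl (fun t : 𝕜 => (t ^ (m + 2)) ^ 2) (𝓝 0)).mul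
        ((continuousAt_const.mul (hG.pow 2)).tendsto.isBigO_one 𝕜)
    exact IsBigO.of_pow two_ne_zero (this.congr_left fun t => (hu_sq t).symm)
  obtain ⟨F, hF, hF0, hu_eq⟩ := exists_eq_pow_mul_of_iteratedDeriv_eq_zero hu
    (iteratedDeriv_eq_zero_of_isBigO hu hu_isBigO)
  have hF_sq : F 0 ^ 2 = a * G 0 ^ 2 := by
    refine tendsto_nhds_unique_of_eventuallyEq (l := 𝓝[≠] 0)
      ((hF.pow 2).tendsto.mono_left nhdsWithin_le_nhds)
      ((continuousAt_const.mul (hG.pow 2)).tendsto.mono_left nhdsWithin_le_nhds) ?_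
    filter_upwards [self_mem_nhdsWithin] with t ht
    refine mul_left_cancel₀ (pow_ne_zero 2 (pow_ne_zero (m + 2) ht)) ?_
    simp only [Pi.mul_apply, Pi.pow_apply]
    rw [← hu_sq, hu_eq]
    ring
  rwa [hF0, hG0] at hF_sq

end OneVariable

theorem iteratedDeriv_comp_add_smul {𝕜 E F : Type*} [NontriviallyNormedField 𝕜]
    [NormedAddCommGroup E] [NormedSpace 𝕜 E] [NormedAddCommGroup F] [NormedSpace 𝕜 F]
    {n : ℕ} {f : E → F} (hf : ContDiff 𝕜 n f) (x v : E) :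
    iteratedDeriv n (fun t : 𝕜 => f (x + t • v)) 0 = iteratedFDeriv 𝕜 n f x fun _ => v := by
  let L : 𝕜 →L[𝕜] E := (ContinuousLinearMap.id 𝕜 𝕜).smulRight v
  have hfx : ContDiff 𝕜 n fun y => f (x + y) := hf.comp (contDiff_const.add contDiff_id)
  have hL := L.iteratedFDeriv_comp_right hfx 0 le_rfl
  simp only [Function.comp_def, map_zero, iteratedFDeriv_comp_add_left, add_zero] at hL
  rw [iteratedDeriv_eq_iteratedFDeriv, show (fun t : 𝕜 => f (x + t • v)) = fun t => f (x + L t)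
    from rfl, hL]
  simp [L]

theorem AnalyticOnNhd.iteratedDeriv_slice {E : Type*} [NormedAddCommGroup E] [NormedSpace ℝ E]
    {F : ℝ × E → ℝ} (hF : AnalyticOnNhd ℝ F univ) (n : ℕ) :
    AnalyticOnNhd ℝ (fun e => iteratedDeriv n (fun t => F (t, e)) 0) univ := by
  have hslice : ∀ e, iteratedDeriv n (fun t => F (t, e)) 0 =
      iteratedFDeriv ℝ n F (0, e) fun _ => (1, 0) := fun e => by
    simpa using iteratedDeriv_comp_add_smul hF.contDiff (0, e) (1, 0)
  simp_rw [hslice]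
  exact ((ContinuousMultilinearMap.apply ℝ _ ℝ _).analyticOnNhd univ).comp
    ((hF.iteratedFDeriv n).comp (fun _ _ => analyticAt_const.prod analyticAt_id)
      (mapsTo_univ _ _)) (mapsTo_univ _ _)

theorem exists_initialCoeff_eq_mul {E : Type*} [NormedAddCommGroup E] [NormedSpace ℝ E]
    {F G w : ℝ × E → ℝ} (hF : AnalyticOnNhd ℝ F univ) (hG : AnalyticOnNhd ℝ G univ)
    (hw : Continuous w) (hGF : ∀ p, G p = w p * F p) (hF0 : F ≠ 0) :
    ∃ P Q : E → ℝ, AnalyticOnNhd ℝ P univ ∧ AnalyticOnNhd ℝ Q univ ∧ Q ≠ 0 ∧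
      ∀ e, P e = w (0, e) * Q e := by
  have hslice : ∀ {f : ℝ × E → ℝ}, AnalyticOnNhd ℝ f univ → ∀ e,
      AnalyticOnNhd ℝ (fun t => f (t, e)) univ := fun hf e =>
    hf.comp (fun _ _ => analyticAt_id.prod analyticAt_const) (mapsTo_univ _ _)
  obtain ⟨p, hp⟩ := Function.ne_iff.mp hF0
  obtain ⟨m, hlow, e₀, he₀⟩ := exists_min_iteratedDeriv_ne_zero (hslice hF) ⟨p.2, p.1, hp⟩
  exact ⟨_, _, hG.iteratedDeriv_slice m, hF.iteratedDeriv_slice m, Function.ne_iff.mpr ⟨e₀, he₀⟩,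
    fun e => iteratedDeriv_eq_mul_of_eq_mul (hslice hG e 0 trivial) (hslice hF e 0 trivial)
      (hw.comp (continuous_id.prodMk continuous_const)).continuousAt (fun t => hGF (t, e))
      fun j hj => hlow j hj e⟩

section Polynomials

open Polynomial

theorem MultilinearMap.exists_polynomial_eval_eq {R M : Type*} [CommRing R] [AddCommGroup M]
    [Module R M] {n : ℕ} (f : MultilinearMap R (fun _ : Fin n => M) R) (a b : M) :
    ∃ p : R[X], ∀ c, p.eval c = f fun _ => a + c • b := by
  classical
  refine ⟨∑ s : Finset (Fin n), C (f (s.piecewise (fun _ => b) fun _ => a)) * X ^ s.card,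
    fun c => ?_⟩
  have hsplit : (fun _ : Fin n => a + c • b) = (fun _ => c • b) + fun _ => a := by
    ext; simp [add_comm]
  rw [hsplit, f.map_add_univ, eval_finsetSum]
  refine Finset.sum_congr rfl fun s _ => ?_
  have hpw : (s.piecewise (fun _ => c • b) fun _ => a) = s.piecewise
      (fun i => c • (s.piecewise (fun _ => b) fun _ => a) i)
      (s.piecewise (fun _ => b) fun _ => a) := by
    ext i; by_cases hi : i ∈ s <;> simp [hi]
  rw [hpw, f.map_piecewise_smul]
  simp only [eval_mul, eval_C, eval_pow, eval_X, Finset.prod_const, smul_eq_mul]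
  ring

theorem exists_polynomial_eval_eq_iteratedDeriv_line {P : ℝ × ℝ → ℝ} {n : ℕ}
    (hP : ContDiff ℝ n P) :
    ∃ p : ℝ[X], ∀ c, p.eval c = iteratedDeriv n (fun t : ℝ => P (t • (1, c))) 0 := by
  obtain ⟨p, hp⟩ :=
    (iteratedFDeriv ℝ n P 0).toMultilinearMap.exists_polynomial_eval_eq (1, 0) (0, 1)
  refine ⟨p, fun c => ?_⟩
  simpa [hp] using (iteratedDeriv_comp_add_smul hP 0 (1, c)).symm

theorem Polynomial.eq_zero_of_sq_eq_mul_sq {K : Type*} [Field K] {a p q : K[X]} {ζ : K}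
    (ha : a.Separable) (hζ : a.IsRoot ζ) (h : p ^ 2 = a * q ^ 2) : q = 0 := by
  by_contra hq
  have hrhs : a * q ^ 2 ≠ 0 := mul_ne_zero ha.ne_zero (pow_ne_zero 2 hq)
  have hp : p ≠ 0 := fun hp => hrhs (by rw [← h, hp]; ring)
  have ha1 : rootMultiplicity ζ a = 1 := le_antisymm (rootMultiplicity_le_one_of_separable ha ζ)
    ((rootMultiplicity_pos ha.ne_zero).mpr hζ)
  -- `ζ` is a root of even multiplicity on the left and of odd multiplicity on the right.
  have hmult := congrArg (rootMultiplicity ζ) h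
  rw [rootMultiplicity_mul hrhs, sq, sq, rootMultiplicity_mul (mul_ne_zero hp hp),
    rootMultiplicity_mul (mul_ne_zero hq hq), ha1] at hmult
  omega

theorem Polynomial.eq_zero_of_sq_eq_one_add_X_pow_four_mul_sq {p q : ℝ[X]}
    (h : p ^ 2 = (1 + X ^ 4) * q ^ 2) : q = 0 := by
  have ha : (1 + X ^ 4 : ℂ[X]) = X ^ 4 - C (-1) := by simp [add_comm]
  have hsep : (1 + X ^ 4 : ℂ[X]).Separable :=
    ha ▸ separable_X_pow_sub_C _ (by norm_num) (by norm_num)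
  obtain ⟨ζ, hζ⟩ := Complex.exists_root (f := 1 + X ^ 4)
    (by rw [ha, degree_X_pow_sub_C (by norm_num)]; norm_num)
  have hC : (p.map (algebraMap ℝ ℂ)) ^ 2 = (1 + X ^ 4) * (q.map (algebraMap ℝ ℂ)) ^ 2 := by
    simpa using congrArg (map (algebraMap ℝ ℂ)) h
  exact (Polynomial.map_eq_zero_iff (algebraMap ℝ ℂ).injective).mp
    (eq_zero_of_sq_eq_mul_sq hsep hζ hC)

theorem exists_apply_smul_ne_zero {Q : ℝ × ℝ → ℝ} (hQ : Continuous Q) (hne : Q ≠ 0) :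
    ∃ c t : ℝ, Q (t • (1, c)) ≠ 0 := by
  obtain ⟨q₀, hq₀⟩ := Function.ne_iff.mp hne
  have hdense : Dense {q : ℝ × ℝ | q.1 ≠ 0} := (dense_compl_singleton 0).preimage isOpenMap_fst
  obtain ⟨q, hq1, hQq⟩ := hdense.exists_mem_open
    (isOpen_ne_fun hQ continuous_const : IsOpen {q | Q q ≠ 0}) ⟨q₀, hq₀⟩
  have hq : q.1 • ((1 : ℝ), q.2 / q.1) = q := by ext <;> simp [mul_div_cancel₀ _ hq1]
  exact ⟨q.2 / q.1, q.1, by rwa [hq]⟩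

theorem eq_zero_of_sq_eq_quartic_mul_sq {P Q : ℝ × ℝ → ℝ} (hP : AnalyticOnNhd ℝ P univ)
    (hQ : AnalyticOnNhd ℝ Q univ) (hPQ : ∀ z w, P (z, w) ^ 2 = (z ^ 4 + w ^ 4) * Q (z, w) ^ 2) :
    Q = 0 := by
  by_contra hQne
  have hline : ∀ {f : ℝ × ℝ → ℝ}, AnalyticOnNhd ℝ f univ → ∀ c : ℝ,
      AnalyticOnNhd ℝ (fun t : ℝ => f (t • (1, c))) univ := fun hf c =>
    hf.comp (fun t _ => by fun_prop) (mapsTo_univ _ _)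
  obtain ⟨m, hlow, c₀, hc₀⟩ := exists_min_iteratedDeriv_ne_zero (hline hQ)
    (exists_apply_smul_ne_zero hQ.continuous hQne)
  obtain ⟨p, hp⟩ := exists_polynomial_eval_eq_iteratedDeriv_line (n := m + 2) hP.contDiff
  obtain ⟨q, hq⟩ := exists_polynomial_eval_eq_iteratedDeriv_line (n := m) hQ.contDiff
  have hpq : (C ((m + 2)! : ℝ)⁻¹ * p) ^ 2 = (1 + X ^ 4) * (C (m ! : ℝ)⁻¹ * q) ^ 2 := by
    refine Polynomial.funext fun c => ?_
    have hsq := sq_iteratedDeriv_add_two_div_factorial (a := 1 + c ^ 4) (hline hP c 0 trivial)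
      (hline hQ c 0 trivial) (fun t => by simpa [mul_pow] using (hPQ t (t * c)).trans (by ring))
      fun j hj => hlow j hj c
    simpa [hp, hq, div_eq_inv_mul] using hsq
  have hq0 := congrArg (eval c₀) (eq_zero_of_sq_eq_one_add_X_pow_four_mul_sq hpq)
  exact hc₀ (by simpa [hq, Nat.factorial_ne_zero] using hq0)

end Polynomials

theorem IsNashRegulous.exists_analytic_eq_mul {n : ℕ} {f : (Fin n → ℝ) → ℝ}
    (hf : IsNashRegulous f) : ∃ g h : (Fin n → ℝ) → ℝ, AnalyticOnNhd ℝ g univ ∧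
      AnalyticOnNhd ℝ h univ ∧ h ≠ 0 ∧ ∀ x, g x = f x * h x := by
  obtain ⟨hfc, g, h, ⟨hg, -⟩, ⟨hh, -⟩, hnd, hfgh⟩ := hf
  have hdense : Dense {x | h x ≠ 0} := by
    rw [IsNowhereDense, (isClosed_eq hh.continuous continuous_const).closure_eq,
      interior_eq_empty_iff_dense_compl] at hnd
    exact hnd
  obtain ⟨x₀, hx₀⟩ := hdense.nonempty
  refine ⟨g, h, hg, hh, Function.ne_iff.mpr ⟨x₀, hx₀⟩, congrFun ?_⟩
  refine Continuous.ext_on hdense hg.continuous (hfc.mul hh.continuous) fun x hx => ?_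
  simp [hfgh x hx, div_mul_cancel₀ _ hx]

theorem sq_apply_zero_zero_eq {ψ₁ ψ₂ : (Fin 4 → ℝ) → ℝ} (hψ₁ : Continuous ψ₁)
    (h : ∀ x y z w : ℝ, x ^ 4 * y ^ 2 * ψ₁ ![x, y, z, w] +
      (x ^ 4 - y ^ 4 * (z ^ 4 + w ^ 4)) * ψ₂ ![x, y, z, w] = x ^ 6) (z w : ℝ) :
    ψ₁ ![0, 0, z, w] ^ 2 = z ^ 4 + w ^ 4 := by
  have hoff : ∀ p : ℝ × ℝ, p ≠ 0 → ψ₁ ![0, 0, p.1, p.2] ^ 2 = p.1 ^ 4 + p.2 ^ 4 := by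
    rintro ⟨z, w⟩ hzw
    have hpos : 0 < z ^ 4 + w ^ 4 := by
      rcases not_and_or.mp (mt Prod.mk_eq_zero.mpr hzw) with hz | hw <;> positivity
    set s := √√(z ^ 4 + w ^ 4)
    have hs4 : s ^ 4 = z ^ 4 + w ^ 4 := by
      rw [show s ^ 4 = (s ^ 2) ^ 2 by ring, Real.sq_sqrt (Real.sqrt_nonneg _),
        Real.sq_sqrt hpos.le]
    have hs : s ≠ 0 := fun hs => by simp [hs] at hs4; linarith
    have hcurve : (fun t => ψ₁ ![t * s, t, z, w]) = fun _ => s ^ 2 := by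
      refine Continuous.ext_on (dense_compl_singleton 0) (by fun_prop) continuous_const
        fun t ht => ?_
      have ht : t ≠ 0 := ht
      have heq := h (t * s) t z w
      rw [← hs4, show (t * s) ^ 4 - t ^ 4 * s ^ 4 = 0 by ring] at heq
      refine mul_left_cancel₀ (by positivity : (t * s) ^ 4 * t ^ 2 ≠ 0) ?_
      linear_combination heq
    have h0 := congrFun hcurve 0
    simp only [zero_mul] at h0
    rw [h0, ← hs4]
    ring
  exact congrFun (Continuous.ext_on (dense_compl_singleton (0 : ℝ × ℝ)) (by fun_prop)
    (by fun_prop) hoff) (z, w)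

/-- There do not exist Nash regulous functions `ψ₁, ψ₂ : ℝ⁴ → ℝ` satisfying
`x⁴·y²·ψ₁(x,y,z,w) + (x⁴ − y⁴·(z⁴ + w⁴))·ψ₂(x,y,z,w) = x⁶` for all `(x,y,z,w) ∈ ℝ⁴`. -/
theorem no_nashRegulous_solution_dim4 :
    ¬ ∃ ψ₁ ψ₂ : (Fin 4 → ℝ) → ℝ, IsNashRegulous ψ₁ ∧ IsNashRegulous ψ₂ ∧
      ∀ x y z w : ℝ,
        x ^ 4 * y ^ 2 * ψ₁ ![x, y, z, w] +
          (x ^ 4 - y ^ 4 * (z ^ 4 + w ^ 4)) * ψ₂ ![x, y, z, w] = x ^ 6 := by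
  rintro ⟨ψ₁, ψ₂, hψ₁, -, heq⟩
  obtain ⟨g, h, hg, hh, hh0, hgh⟩ := hψ₁.exists_analytic_eq_mul
  obtain ⟨x₀, hx₀⟩ := Function.ne_iff.mp hh0
  let ι : ℝ × ℝ × ℝ → Fin 4 → ℝ := fun p => ![p.1 * x₀ 0, p.1 * x₀ 1, p.2.1, p.2.2]
  have hι : AnalyticOnNhd ℝ ι univ := by
    refine fun p _ => analyticAt_pi_iff.mpr fun i => ?_
    fin_cases i
    exacts [analyticAt_fst.mul analyticAt_const, analyticAt_fst.mul analyticAt_const,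
      analyticAt_fst.comp analyticAt_snd, analyticAt_snd.comp analyticAt_snd]
  have hιx₀ : ι (1, x₀ 2, x₀ 3) = x₀ := by
    ext i; fin_cases i <;> simp [ι]
  obtain ⟨P, Q, hP, hQ, hQ0, hPQ⟩ := exists_initialCoeff_eq_mul
    (hh.comp hι (mapsTo_univ _ _)) (hg.comp hι (mapsTo_univ _ _)) (hψ₁.1.comp hι.continuous)
    (fun p => hgh (ι p)) (Function.ne_iff.mpr ⟨(1, x₀ 2, x₀ 3), by simpa [hιx₀] using hx₀⟩)
  refine hQ0 (eq_zero_of_sq_eq_quartic_mul_sq hP hQ fun z w => ?_)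
  rw [hPQ, mul_pow, ← sq_apply_zero_zero_eq hψ₁.1 heq z w]
  simp [ι]
end
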